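/- For every game G the following hold. (JEP) For all finite games G₁, G₂ and all game embeddings f : G₁ → G and g : G₂ → G, there exist a finite game G' and game embeddings f' : G₁ → G', g' : G₂ → G', and i : G' → G such that i ∘ f' = f and i ∘ g' = g. (AP) Moreover, if additionally H is a finite game and c₁ : H → G₁, c₂ : H → G₂ are game embeddings with f ∘ c₁ = g ∘ c₂, then G', f', g', i as above can be chosen so that also f' ∘ c₁ = g' ∘ c₂. -/

import Mathlib

universe u v w x y

namespace FraisseGames

/-- The initial segment (of length `n`) of an infinite sequence `R`. -/
def runPrefix {M : Type u} (R : ℕ → M) (n : ℕ) : List M :=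
  (List.range n).map R

/-- `T` is a game tree over `M`: it is closed under initial segments, and every
moment of `T` has a one-step extension in `T`. -/
def IsGameTree {M : Type u} (T : Set (List M)) : Prop :=
  (∀ t ∈ T, ∀ k : ℕ, t.take k ∈ T) ∧ ∀ t ∈ T, ∃ x : M, t ++ [x] ∈ T

/-- The set of runs of the tree `T`. -/
def Runs {M : Type u} (T : Set (List M)) : Set (ℕ → M) :=
  {R | ∀ n : ℕ, runPrefix R n ∈ T}

/-- A game over `M`: a game tree together with a payoff set of runs. -/
structure Game (M : Type u) : Type u where
  tree : Set (List M)
  isGameTree : IsGameTree tree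
  payoff : Set (ℕ → M)
  payoff_subset : payoff ⊆ Runs tree

/-- A game is finite if its set of runs is finite. -/
def Game.IsFin {M : Type u} (G : Game M) : Prop := (Runs G.tree).Finite

/-- The subgame relation `G ≤ G'`. -/
def Game.Sub {M : Type u} (G G' : Game M) : Prop :=
  G.tree ⊆ G'.tree ∧ G.payoff = G'.payoff ∩ Runs G.tree

/-- `f` is a chronological map from `T₁` to `T₂`: it maps `T₁` into `T₂` and it
preserves lengths and truncations of moments. -/
def Chronological {M₁ : Type u} {M₂ : Type v} (T₁ : Set (List M₁)) (T₂ : Set (List M₂))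
    (f : List M₁ → List M₂) : Prop :=
  (∀ t ∈ T₁, f t ∈ T₂) ∧ (∀ t ∈ T₁, (f t).length = t.length) ∧
    ∀ t ∈ T₁, ∀ k : ℕ, f (t.take k) = (f t).take k

/-- `BarMapsTo f R S` says that the map `f̄` on runs induced by the chronological
map `f` sends the run `R` to the run `S`, i.e. `S↾n = f (R↾n)` for all `n`. -/
def BarMapsTo {M₁ : Type u} {M₂ : Type v} (f : List M₁ → List M₂)
    (R : ℕ → M₁) (S : ℕ → M₂) : Prop :=
  ∀ n : ℕ, runPrefix S n = f (runPrefix R n)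

/-- `f` is an A-morphism from `G₁` to `G₂`: a chronological map whose induced map on
runs sends runs won by Ali to runs won by Ali. -/
def IsAMorphism {M₁ : Type u} {M₂ : Type v} (G₁ : Game M₁) (G₂ : Game M₂)
    (f : List M₁ → List M₂) : Prop :=
  Chronological G₁.tree G₂.tree f ∧
    ∀ R ∈ G₁.payoff, ∀ S : ℕ → M₂, BarMapsTo f R S → S ∈ G₂.payoff

/-- `f` is a game embedding from `G₁` to `G₂`: a chronological map, injective on the
tree, such that for every run `R` of `G₁`, `R ∈ A₁ ↔ f̄ R ∈ A₂`. -/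
def IsGameEmbedding {M₁ : Type u} {M₂ : Type v} (G₁ : Game M₁) (G₂ : Game M₂)
    (f : List M₁ → List M₂) : Prop :=
  Chronological G₁.tree G₂.tree f ∧
    (∀ t ∈ G₁.tree, ∀ s ∈ G₁.tree, f t = f s → t = s) ∧
    ∀ R ∈ Runs G₁.tree, ∀ S : ℕ → M₂, BarMapsTo f R S → (R ∈ G₁.payoff ↔ S ∈ G₂.payoff)

/-- `f` is an isomorphism of games from `G₁` onto `G₂`: a game embedding that is
surjective onto the tree of `G₂`. -/
def IsGameIso {M₁ : Type u} {M₂ : Type v} (G₁ : Game M₁) (G₂ : Game M₂)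
    (f : List M₁ → List M₂) : Prop :=
  IsGameEmbedding G₁ G₂ f ∧ ∀ s ∈ G₂.tree, ∃ t ∈ G₁.tree, f t = s

/-- The set of eventually-zero infinite sequences of natural numbers. -/
def c00 : Set (ℕ → ℕ) := {R | ∃ N : ℕ, ∀ n ≥ N, R n = 0}

/-- The game `G_FL = (ω^{<ω}, c₀₀)`. -/
def GFL : Game ℕ where
  tree := Set.univ
  isGameTree := ⟨fun _ _ _ => trivial, fun _ _ => ⟨0, trivial⟩⟩
  payoff := c00
  payoff_subset := fun _ _ _ => trivial

/-!
Both properties are witnessed inside `G` itself: `G'` is the subgame of `G` on the union of the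
images of the two trees, with `f' = f`, `g' = g` and `i = id`, so that `f' ∘ c₁ = g' ∘ c₂` is the
hypothesis `f ∘ c₁ = g ∘ c₂`. `G'` is finite because an injective chronological map lifts every
run of its image to a run of its domain, and every run of a union of two trees is a run of one
of them.
-/

section Runs

variable {M : Type u}

theorem runPrefix_length (R : ℕ → M) (n : ℕ) : (runPrefix R n).length = n := by
  simp [runPrefix]

theorem runPrefix_take (R : ℕ → M) {n m : ℕ} (h : n ≤ m) :
    (runPrefix R m).take n = runPrefix R n := by
  simp [runPrefix, ← List.map_take, List.take_range, Nat.min_eq_left h]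

theorem runPrefix_getElem (R : ℕ → M) {n k : ℕ} (h : k < (runPrefix R n).length) :
    (runPrefix R n)[k] = R k := by
  simp [runPrefix]

theorem eq_of_runPrefix_eq {R S : ℕ → M} (h : ∀ n, runPrefix R n = runPrefix S n) :
    R = S := by
  funext n
  have h' := congrArg (·[n]?) (h (n + 1))
  simpa [runPrefix] using h'

theorem exists_runPrefix_eq {t : ℕ → List M} (hlen : ∀ n, (t n).length = n)
    (htake : ∀ n m, n ≤ m → (t m).take n = t n) : ∃ R : ℕ → M, ∀ n, runPrefix R n = t n := by
  refine ⟨fun n => (t (n + 1))[n]'(by rw [hlen]; omega), fun n => ?_⟩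
  refine List.ext_getElem (by rw [runPrefix_length, hlen]) fun k hk hk' => ?_
  rw [runPrefix_getElem]
  have hkn : k + 1 ≤ n := by rw [hlen] at hk'; omega
  simp only [← htake (k + 1) n hkn, List.getElem_take]

theorem runs_union_subset {A B : Set (List M)}
    (hA : ∀ s ∈ A, ∀ k : ℕ, s.take k ∈ A) (hB : ∀ s ∈ B, ∀ k : ℕ, s.take k ∈ B) :
    Runs (A ∪ B) ⊆ Runs A ∪ Runs B := by
  intro S hS
  by_contra hSAB
  simp only [Set.mem_union, Runs, Set.mem_ofPred_eq, not_or, not_forall] at hSAB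
  obtain ⟨⟨n, hnA⟩, m, hmB⟩ := hSAB
  -- the prefix of length `max n m` lies in `A` or in `B`, hence so do its shorter prefixes
  rcases hS (max n m) with hA' | hB'
  · exact hnA (runPrefix_take S (le_max_left n m) ▸ hA _ hA' n)
  · exact hmB (runPrefix_take S (le_max_right n m) ▸ hB _ hB' m)

theorem IsGameTree.union {A B : Set (List M)} (hA : IsGameTree A) (hB : IsGameTree B) :
    IsGameTree (A ∪ B) := by
  refine ⟨?_, ?_⟩
  · rintro s (hs | hs) k
    exacts [Or.inl (hA.1 s hs k), Or.inr (hB.1 s hs k)]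
  · rintro s (hs | hs)
    · obtain ⟨x, hx⟩ := hA.2 s hs
      exact ⟨x, Or.inl hx⟩
    · obtain ⟨x, hx⟩ := hB.2 s hs
      exact ⟨x, Or.inr hx⟩

end Runs

theorem BarMapsTo.subsingleton {M₁ : Type u} {M₂ : Type v} (f : List M₁ → List M₂)
    (R : ℕ → M₁) : {S | BarMapsTo f R S}.Subsingleton :=
  fun _ hS _ hS' => eq_of_runPrefix_eq fun n => (hS n).trans (hS' n).symm

namespace Chronological

variable {M₁ : Type u} {M₂ : Type v} {T₁ : Set (List M₁)} {T₂ : Set (List M₂)}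
  {f : List M₁ → List M₂}

theorem isGameTree_image (hf : Chronological T₁ T₂ f) (hT₁ : IsGameTree T₁) :
    IsGameTree (f '' T₁) := by
  refine ⟨?_, ?_⟩
  · rintro _ ⟨t, ht, rfl⟩ k
    exact ⟨t.take k, hT₁.1 t ht k, hf.2.2 t ht k⟩
  · rintro _ ⟨t, ht, rfl⟩
    obtain ⟨x, hx⟩ := hT₁.2 t ht
    have hlen : (f (t ++ [x])).length = (f t).length + 1 := by
      rw [hf.2.1 _ hx, hf.2.1 _ ht, List.length_append, List.length_singleton]
    have htake : (f (t ++ [x])).take (f t).length = f t := by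
      rw [hf.2.1 _ ht, ← hf.2.2 _ hx, List.take_left]
    obtain ⟨y, hy⟩ := List.length_eq_one_iff.mp
      (show ((f (t ++ [x])).drop (f t).length).length = 1 by simp [hlen])
    refine ⟨y, t ++ [x], hx, ?_⟩
    rw [← List.take_append_drop (f t).length (f (t ++ [x])), htake, hy]

/-- Injectivity makes the preimages of the prefixes of a run of `f '' T₁` coherent, so they
are the prefixes of a run of `T₁`. -/
theorem exists_barMapsTo_of_mem_runs_image (hf : Chronological T₁ T₂ f)
    (hinj : ∀ t ∈ T₁, ∀ s ∈ T₁, f t = f s → t = s) (hT₁ : ∀ t ∈ T₁, ∀ k : ℕ, t.take k ∈ T₁)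
    {S : ℕ → M₂} (hS : S ∈ Runs (f '' T₁)) : ∃ R ∈ Runs T₁, BarMapsTo f R S := by
  choose t ht hft using hS
  have hlen : ∀ n, (t n).length = n := fun n => by
    rw [← hf.2.1 _ (ht n), hft, runPrefix_length]
  have htake : ∀ n m, n ≤ m → (t m).take n = t n := fun n m hnm =>
    hinj _ (hT₁ _ (ht m) n) _ (ht n) (by rw [hf.2.2 _ (ht m), hft, hft, runPrefix_take S hnm])
  obtain ⟨R, hR⟩ := exists_runPrefix_eq hlen htake
  exact ⟨R, fun n => hR n ▸ ht n, fun n => by rw [hR, hft]⟩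

theorem runs_image_finite (hf : Chronological T₁ T₂ f)
    (hinj : ∀ t ∈ T₁, ∀ s ∈ T₁, f t = f s → t = s) (hT₁ : ∀ t ∈ T₁, ∀ k : ℕ, t.take k ∈ T₁)
    (hfin : (Runs T₁).Finite) : (Runs (f '' T₁)).Finite := by
  refine (hfin.biUnion fun R _ => (BarMapsTo.subsingleton f R).finite).subset fun S hS => ?_
  obtain ⟨R, hR, hRS⟩ := exists_barMapsTo_of_mem_runs_image hf hinj hT₁ hS
  exact Set.mem_biUnion hR hRS

end Chronological

def Game.restrict {M : Type u} (G : Game M) (T : Set (List M)) (hT : IsGameTree T) : Game M :=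
  ⟨T, hT, G.payoff ∩ Runs T, Set.inter_subset_right⟩

theorem isGameEmbedding_id_restrict {M : Type u} (G : Game M) {T : Set (List M)}
    (hT : IsGameTree T) (hTG : T ⊆ G.tree) : IsGameEmbedding (G.restrict T hT) G id := by
  refine ⟨⟨fun t ht => hTG ht, fun _ _ => rfl, fun _ _ _ => rfl⟩, fun _ _ _ _ h => h, ?_⟩
  intro R hR S hRS
  obtain rfl : S = R := eq_of_runPrefix_eq hRS
  exact ⟨fun h => h.1, fun h => ⟨h, hR⟩⟩

theorem IsGameEmbedding.restrict {M₁ : Type u} {M : Type v} {G₁ : Game M₁} {G : Game M}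
    {f : List M₁ → List M} (hf : IsGameEmbedding G₁ G f) {T : Set (List M)} (hT : IsGameTree T)
    (hfT : f '' G₁.tree ⊆ T) : IsGameEmbedding G₁ (G.restrict T hT) f := by
  obtain ⟨hc, hinj, hpay⟩ := hf
  refine ⟨⟨fun t ht => hfT ⟨t, ht, rfl⟩, hc.2.1, hc.2.2⟩, hinj, fun R hR S hRS => ?_⟩
  have hST : S ∈ Runs T := fun n => hRS n ▸ hfT ⟨_, hR n, rfl⟩
  rw [hpay R hR S hRS]
  exact ⟨fun h => ⟨h, hST⟩, fun h => h.1⟩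

theorem exists_finite_subgame_of_isGameEmbedding {M : Type u} {M₁ : Type v} {M₂ : Type w}
    (G : Game M) {G₁ : Game M₁} {G₂ : Game M₂} (h₁ : G₁.IsFin) (h₂ : G₂.IsFin)
    {f : List M₁ → List M} {g : List M₂ → List M}
    (hf : IsGameEmbedding G₁ G f) (hg : IsGameEmbedding G₂ G g) :
    ∃ G' : Game M, G'.IsFin ∧ IsGameEmbedding G₁ G' f ∧ IsGameEmbedding G₂ G' g ∧
      IsGameEmbedding G' G id := by
  have hT₁ := hf.1.isGameTree_image G₁.isGameTree
  have hT₂ := hg.1.isGameTree_image G₂.isGameTree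
  have hT := hT₁.union hT₂
  have hTG : f '' G₁.tree ∪ g '' G₂.tree ⊆ G.tree := by
    rintro _ (⟨t, ht, rfl⟩ | ⟨t, ht, rfl⟩)
    exacts [hf.1.1 t ht, hg.1.1 t ht]
  refine ⟨G.restrict _ hT, ?_, hf.restrict hT Set.subset_union_left,
    hg.restrict hT Set.subset_union_right, isGameEmbedding_id_restrict G hT hTG⟩
  exact ((hf.1.runs_image_finite hf.2.1 G₁.isGameTree.1 h₁).union
    (hg.1.runs_image_finite hg.2.1 G₂.isGameTree.1 h₂)).subset (runs_union_subset hT₁.1 hT₂.1)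

/-- for every game `G`, the comma category of finite games with game
embeddings over `G` has the joint embedding property and the amalgamation
property. -/
theorem finite_games_over_game_jep_and_ap {M : Type u} (G : Game M) :
    -- (JEP)
    (∀ (M₁ M₂ : Type u) (G₁ : Game M₁) (G₂ : Game M₂), G₁.IsFin → G₂.IsFin →
      ∀ (f : List M₁ → List M) (g : List M₂ → List M),
        IsGameEmbedding G₁ G f → IsGameEmbedding G₂ G g →
        ∃ (N : Type u) (G' : Game N), G'.IsFin ∧
          ∃ (f' : List M₁ → List N) (g' : List M₂ → List N) (i : List N → List M),
            IsGameEmbedding G₁ G' f' ∧ IsGameEmbedding G₂ G' g' ∧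
            IsGameEmbedding G' G i ∧
            (∀ t ∈ G₁.tree, i (f' t) = f t) ∧ (∀ t ∈ G₂.tree, i (g' t) = g t)) ∧
    -- (AP)
    (∀ (M₁ M₂ P : Type u) (G₁ : Game M₁) (G₂ : Game M₂) (H : Game P),
      G₁.IsFin → G₂.IsFin → H.IsFin →
      ∀ (f : List M₁ → List M) (g : List M₂ → List M)
        (c₁ : List P → List M₁) (c₂ : List P → List M₂),
        IsGameEmbedding G₁ G f → IsGameEmbedding G₂ G g →
        IsGameEmbedding H G₁ c₁ → IsGameEmbedding H G₂ c₂ →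
        (∀ t ∈ H.tree, f (c₁ t) = g (c₂ t)) →
        ∃ (N : Type u) (G' : Game N), G'.IsFin ∧
          ∃ (f' : List M₁ → List N) (g' : List M₂ → List N) (i : List N → List M),
            IsGameEmbedding G₁ G' f' ∧ IsGameEmbedding G₂ G' g' ∧
            IsGameEmbedding G' G i ∧
            (∀ t ∈ G₁.tree, i (f' t) = f t) ∧ (∀ t ∈ G₂.tree, i (g' t) = g t) ∧
            (∀ t ∈ H.tree, f' (c₁ t) = g' (c₂ t))) := by
  refine ⟨fun M₁ M₂ G₁ G₂ h₁ h₂ f g hf hg => ?_,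
    fun M₁ M₂ P G₁ G₂ H h₁ h₂ _ f g c₁ c₂ hf hg _ _ hcomm => ?_⟩
  · obtain ⟨G', hfin, hf', hg', hi⟩ := exists_finite_subgame_of_isGameEmbedding G h₁ h₂ hf hg
    exact ⟨M, G', hfin, f, g, id, hf', hg', hi, fun _ _ => rfl, fun _ _ => rfl⟩
  · obtain ⟨G', hfin, hf', hg', hi⟩ := exists_finite_subgame_of_isGameEmbedding G h₁ h₂ hf hg
    exact ⟨M, G', hfin, f, g, id, hf', hg', hi, fun _ _ => rfl, fun _ _ => rfl, hcomm⟩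

end FraisseGames
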